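/- arXiv:1507.01360 — 3 statements merged into one kernel-verified Lean document; each statement's English description precedes it below -/
import Mathlib

section
/- Let N ≥ 2, let λ₁ < λ₂ ≤ 0, V : (0,∞) → ℝ continuous, and let η₁, η₂ ∈ C²((0,∞)) be nonnegative, not identically zero, solutions of −η_i'' − ((N−1)/r)η_i' − V(r)η_i = λ_i η_i / r² on (0,∞). Suppose η₁ > 0 on (0,∞) and that the boundary terms vanish along sequences r_n → 0, R_n → ∞: r_n^{N-1}(η₁η₂' − η₂η₁')(r_n) → 0 and R_n^{N-1}(η₁η₂' − η₂η₁')(R_n) → 0, and ∫_0^∞ η₁(r)η₂(r) r^{N-3} dr < ∞ and is positive. Then λ₁ = λ₂ (contradiction); i.e., no such pair with λ₁ ≠ λ₂ exists. -/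
/-!
The weighted Wronskian `W = r^(N-1) (η₁ η₂' - η₂ η₁')` satisfies
`W' = (λ₁ - λ₂) r^(N-3) η₁ η₂`, the potential terms cancelling. Integrating over `[r_n, R_n]`
and letting `n → ∞`, the boundary terms vanish and the integrals converge by integrability, so
`(λ₁ - λ₂) ∫₀^∞ r^(N-3) η₁ η₂ dr = 0`, which contradicts `λ₁ < λ₂` and the positivity of the
integral.
-/

open Real Filter MeasureTheory Set Topology

theorem integral_Ioi_eq_of_hasDerivAt_of_tendsto_sub {ι : Type*} {l : Filter ι} [l.NeBot]
    [l.IsCountablyGenerated] {W g : ℝ → ℝ} {a L : ℝ} {u v : ι → ℝ}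
    (hW : ∀ x ∈ Ioi a, HasDerivAt W (g x) x) (hg : IntegrableOn g (Ioi a))
    (hu : Tendsto u l (𝓝[>] a)) (hv : Tendsto v l atTop)
    (hL : Tendsto (fun i => W (v i) - W (u i)) l (𝓝 L)) :
    ∫ x in Ioi a, g x = L := by
  have hu' : Tendsto u l (𝓝 a) := tendsto_nhds_of_tendsto_nhdsWithin hu
  have hcover : AECover (volume.restrict (Ioi a)) l fun i => Ioc (u i) (v i) :=
    (aecover_Ioi_of_Ioi hu').inter (aecover_Iic hv)
  refine tendsto_nhds_unique (hcover.integral_tendsto_of_countably_generated hg) (hL.congr' ?_)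
  filter_upwards [hu.eventually self_mem_nhdsWithin, hu'.eventually_lt_const (lt_add_one a),
    hv.eventually_ge_atTop (a + 1)] with i (hau : a < u i) hu1 hv1
  have hsub : Icc (u i) (v i) ⊆ Ioi a := fun x hx => hau.trans_le hx.1
  have huv : u i ≤ v i := by linarith
  rw [Measure.restrict_restrict_of_subset (Ioc_subset_Icc_self.trans hsub),
    ← intervalIntegral.integral_of_le huv]
  refine (intervalIntegral.integral_eq_sub_of_hasDerivAt (fun x hx => hW x (hsub ?_))
    (hg.mono_set ?_).intervalIntegrable).symm
  · rwa [uIcc_of_le huv] at hx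
  · rwa [uIcc_of_le huv]

noncomputable def radialWronskian (N : ℕ) (η₁ η₂ : ℝ → ℝ) (r : ℝ) : ℝ :=
  r ^ (N - 1) * (η₁ r * deriv η₂ r - η₂ r * deriv η₁ r)

theorem hasDerivAt_radialWronskian {N : ℕ} (hN : 1 ≤ N) {V η₁ η₂ : ℝ → ℝ} {lam₁ lam₂ r : ℝ}
    (hr : 0 < r) (hη₁ : ContDiffAt ℝ 2 η₁ r) (hη₂ : ContDiffAt ℝ 2 η₂ r)
    (heq₁ : -deriv (deriv η₁) r - ((N : ℝ) - 1) / r * deriv η₁ r - V r * η₁ r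
      = lam₁ * η₁ r / r ^ 2)
    (heq₂ : -deriv (deriv η₂) r - ((N : ℝ) - 1) / r * deriv η₂ r - V r * η₂ r
      = lam₂ * η₂ r / r ^ 2) :
    HasDerivAt (radialWronskian N η₁ η₂)
      ((lam₁ - lam₂) * (η₁ r * η₂ r * r ^ ((N : ℝ) - 3))) r := by
  obtain ⟨m, rfl⟩ : ∃ m, N = m + 1 := ⟨N - 1, by omega⟩
  have hd₁ := (hη₁.differentiableAt two_ne_zero).hasDerivAt
  have hd₂ := (hη₂.differentiableAt two_ne_zero).hasDerivAt
  have hdd₁ := ((hη₁.derivWithin (m := 1) le_rfl).differentiableAt one_ne_zero).hasDerivAt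
  have hdd₂ := ((hη₂.derivWithin (m := 1) le_rfl).differentiableAt one_ne_zero).hasDerivAt
  refine ((hasDerivAt_pow m r).mul ((hd₁.mul hdd₂).sub (hd₂.mul hdd₁))).congr_deriv ?_
  have hpow : r ^ ((↑(m + 1) : ℝ) - 3) = r ^ m / r ^ 2 := by
    rw [← rpow_natCast, ← rpow_natCast, ← rpow_sub hr]; push_cast; ring_nf
  have hpred : (m : ℝ) * r ^ (m - 1) = m * r ^ m / r := by
    rcases m with _ | k
    · simp
    · field_simp; simp [pow_succ]
  have e₁ : deriv (deriv η₁) r = -(m / r * deriv η₁ r) - V r * η₁ r - lam₁ * η₁ r / r ^ 2 := by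
    rw [Nat.cast_succ, add_sub_cancel_right] at heq₁; linarith
  have e₂ : deriv (deriv η₂) r = -(m / r * deriv η₂ r) - V r * η₂ r - lam₂ * η₂ r / r ^ 2 := by
    rw [Nat.cast_succ, add_sub_cancel_right] at heq₂; linarith
  simp only [Pi.mul_apply, Pi.sub_apply]
  rw [hpow, hpred, e₁, e₂]
  field_simp
  ring

theorem stmt8_general (N : ℕ) (hN : 2 ≤ N) (lam₁ lam₂ : ℝ)
    (hlam : lam₁ < lam₂)
    (V η₁ η₂ : ℝ → ℝ)
    (hη₁C2 : ContDiffOn ℝ 2 η₁ (Set.Ioi 0))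
    (hη₂C2 : ContDiffOn ℝ 2 η₂ (Set.Ioi 0))
    (heq₁ : ∀ r ∈ Set.Ioi (0 : ℝ),
      -deriv (deriv η₁) r - ((N : ℝ) - 1) / r * deriv η₁ r - V r * η₁ r
        = lam₁ * η₁ r / r ^ 2)
    (heq₂ : ∀ r ∈ Set.Ioi (0 : ℝ),
      -deriv (deriv η₂) r - ((N : ℝ) - 1) / r * deriv η₂ r - V r * η₂ r
        = lam₂ * η₂ r / r ^ 2)
    (rn Rn : ℕ → ℝ)
    (hrn_pos : ∀ n, 0 < rn n)
    (hrn : Tendsto rn atTop (nhds 0))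
    (hRn : Tendsto Rn atTop atTop)
    (hW0 : Tendsto (fun n => rn n ^ (N - 1) *
        (η₁ (rn n) * deriv η₂ (rn n) - η₂ (rn n) * deriv η₁ (rn n)))
      atTop (nhds 0))
    (hWinf : Tendsto (fun n => Rn n ^ (N - 1) *
        (η₁ (Rn n) * deriv η₂ (Rn n) - η₂ (Rn n) * deriv η₁ (Rn n)))
      atTop (nhds 0))
    (hint : IntegrableOn (fun r => η₁ r * η₂ r * r ^ ((N : ℝ) - 3))
      (Set.Ioi (0 : ℝ)))
    (hpos : 0 < ∫ r in Set.Ioi (0 : ℝ), η₁ r * η₂ r * r ^ ((N : ℝ) - 3)) :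
    False := by
  have hW : ∀ r ∈ Ioi (0 : ℝ), HasDerivAt (radialWronskian N η₁ η₂)
      ((lam₁ - lam₂) * (η₁ r * η₂ r * r ^ ((N : ℝ) - 3))) r := fun r hr =>
    hasDerivAt_radialWronskian (by omega) hr (hη₁C2.contDiffAt (isOpen_Ioi.mem_nhds hr))
      (hη₂C2.contDiffAt (isOpen_Ioi.mem_nhds hr)) (heq₁ r hr) (heq₂ r hr)
  have hboundary : Tendsto (fun n => radialWronskian N η₁ η₂ (Rn n)
      - radialWronskian N η₁ η₂ (rn n)) atTop (𝓝 0) := by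
    rw [← sub_zero 0]; exact hWinf.sub hW0
  have hzero := integral_Ioi_eq_of_hasDerivAt_of_tendsto_sub hW (hint.const_mul _)
    (tendsto_nhdsWithin_iff.2 ⟨hrn, .of_forall hrn_pos⟩) hRn hboundary
  rw [integral_const_mul] at hzero
  exact (mul_neg_of_neg_of_pos (sub_neg.2 hlam) hpos).ne hzero

/-- two nonnegative nontrivial radial solutions of the weighted
eigenvalue equation with distinct nonpositive eigenvalues, vanishing Wronskian
boundary terms and positive finite interaction integral, cannot coexist. -/
theorem stmt8 (N : ℕ) (hN : 2 ≤ N) (lam₁ lam₂ : ℝ)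
    (hlam : lam₁ < lam₂) (hlam2 : lam₂ ≤ 0)
    (V η₁ η₂ : ℝ → ℝ)
    (hV : ContinuousOn V (Set.Ioi 0))
    (hη₁C2 : ContDiffOn ℝ 2 η₁ (Set.Ioi 0))
    (hη₂C2 : ContDiffOn ℝ 2 η₂ (Set.Ioi 0))
    (hη₂nonneg : ∀ r ∈ Set.Ioi (0 : ℝ), 0 ≤ η₂ r)
    (hη₂ne : ∃ r ∈ Set.Ioi (0 : ℝ), η₂ r ≠ 0)
    (hη₁pos : ∀ r ∈ Set.Ioi (0 : ℝ), 0 < η₁ r)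
    (heq₁ : ∀ r ∈ Set.Ioi (0 : ℝ),
      -deriv (deriv η₁) r - ((N : ℝ) - 1) / r * deriv η₁ r - V r * η₁ r
        = lam₁ * η₁ r / r ^ 2)
    (heq₂ : ∀ r ∈ Set.Ioi (0 : ℝ),
      -deriv (deriv η₂) r - ((N : ℝ) - 1) / r * deriv η₂ r - V r * η₂ r
        = lam₂ * η₂ r / r ^ 2)
    (rn Rn : ℕ → ℝ)
    (hrn_pos : ∀ n, 0 < rn n)
    (hrn : Tendsto rn atTop (nhds 0))
    (hRn : Tendsto Rn atTop atTop)
    (hW0 : Tendsto (fun n => rn n ^ (N - 1) *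
        (η₁ (rn n) * deriv η₂ (rn n) - η₂ (rn n) * deriv η₁ (rn n)))
      atTop (nhds 0))
    (hWinf : Tendsto (fun n => Rn n ^ (N - 1) *
        (η₁ (Rn n) * deriv η₂ (Rn n) - η₂ (Rn n) * deriv η₁ (Rn n)))
      atTop (nhds 0))
    (hint : IntegrableOn (fun r => η₁ r * η₂ r * r ^ ((N : ℝ) - 3))
      (Set.Ioi (0 : ℝ)))
    (hpos : 0 < ∫ r in Set.Ioi (0 : ℝ), η₁ r * η₂ r * r ^ ((N : ℝ) - 3)) :
    False :=
  stmt8_general N hN lam₁ lam₂ hlam V η₁ η₂ hη₁C2 hη₂C2 heq₁ heq₂ rn Rn hrn_pos hrn hRn hW0 hWinf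
    hint hpos
end

section
/- Let N ≥ 2 and let u be a sign-changing radial C² solution of −Δu = |u|^{p-1}u in the unit ball B with u = 0 on ∂B, with exactly one interior zero r_p ∈ (0,1), u > 0 on (0, r_p), u < 0 on (r_p, 1), u'(r_p) < 0 and u'(1) > 0. Then η(r) := u'(r) satisfies the equation r²(−η'' − ((N−1)/r)η' − p|u|^{p−1}η) = −(N−1)η on (1/n, 1) for any n with 1/n < r_p, with η(1/n) < 0, η(1) > 0, and η has a unique zero in (1/n, 1). -/
/-!
The differentiated equation is the ODE differentiated once, using `(|s|^{p-1} s)' = p |s|^{p-1}`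
(valid at `s = 0` because `p > 1`).

The sign and zero statements rest on the flux `G(r) = r^{N-1} u'(r)`, for which the equation reads
`G' = -r^{N-1} |u|^{p-1} u`: `G` strictly decreases where `u > 0` and strictly increases where
`u < 0`. If `u'(x) ≥ 0` for some `x ∈ (0, r_p)`, then `G ≥ c > 0` near `0`, so
`u' ≥ c / r^{N-1} ≥ c / r` there, and `u` would fall to `-∞` like `c log r`, contradicting `u > 0`.
Rolle's theorem between the zeros `r_p` and `1` of `u` yields a zero of `u'`; it is unique because
`u' < 0` on `(0, r_p]` and zeros of `u'` are zeros of the injective `G` on `(r_p, 1)`.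
-/

open Real Set Filter Topology Asymptotics

theorem hasDerivAt_abs_rpow_sub_one_mul {p : ℝ} (hp : 1 < p) (x : ℝ) :
    HasDerivAt (fun y => |y| ^ (p - 1) * y) (p * |x| ^ (p - 1)) x := by
  have hpos : ∀ x > 0, HasDerivAt (fun y => |y| ^ (p - 1) * y) (p * |x| ^ (p - 1)) x := by
    intro x hx
    rw [abs_of_pos hx]
    refine (hasDerivAt_rpow_const (p := p) (Or.inl hx.ne')).congr_of_eventuallyEq ?_
    filter_upwards [eventually_gt_nhds hx] with y hy
    rw [abs_of_pos hy, rpow_sub_one hy.ne']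
    field_simp
  rcases lt_trichotomy x 0 with hx | rfl | hx
  · have h := ((hpos (-x) (neg_pos.2 hx)).comp x (hasDerivAt_neg x)).neg
    simp only [abs_neg, mul_neg_one, neg_neg] at h
    refine h.congr_of_eventuallyEq (.of_forall fun y => ?_)
    simp
  · -- `|y| ^ (p - 1) * y` is dominated by `|y| ^ p`, whose derivative at `0` vanishes
    have h := (hasDerivAt_abs_rpow 0 hp).isLittleO
    rw [hasDerivAt_iff_isLittleO]
    simp only [abs_zero, zero_rpow (by linarith : p ≠ 0), sub_zero, mul_zero, smul_eq_mul,
      zero_rpow (by linarith : p - 1 ≠ 0)] at h ⊢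
    refine IsBigO.trans_isLittleO (isBigO_of_le _ fun y => ?_) h
    have hp' : |y| ^ p = |y| ^ (p - 1) * |y| := by
      rw [← rpow_add_one' (abs_nonneg y) (by linarith : (0 : ℝ) < p - 1 + 1).ne', sub_add_cancel]
    simp [hp']
  · exact hpos x hx

section RadialEquation

variable {s : Set ℝ} {u f : ℝ → ℝ} {k r : ℝ}

theorem ContDiffOn.hasDerivAt_of_isOpen (hs : IsOpen s) (hu : ContDiffOn ℝ 2 u s) (hr : r ∈ s) :
    HasDerivAt u (deriv u r) r :=
  ((hu.differentiableOn (by norm_num)).differentiableAt (hs.mem_nhds hr)).hasDerivAt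

theorem ContDiffOn.hasDerivAt_deriv_of_isOpen (hs : IsOpen s) (hu : ContDiffOn ℝ 2 u s)
    (hr : r ∈ s) : HasDerivAt (deriv u) (deriv (deriv u) r) r :=
  (((hu.deriv_of_isOpen hs (m := 1) le_rfl).differentiableOn one_ne_zero).differentiableAt
    (hs.mem_nhds hr)).hasDerivAt

/-- For radial `u` and `k = N - 1`, `(r ^ k u')' = r ^ k Δu`. -/
noncomputable def radialFlux (k : ℝ) (u : ℝ → ℝ) (r : ℝ) : ℝ := r ^ k * deriv u r

theorem hasDerivAt_radialFlux (hs : IsOpen s) (hu : ContDiffOn ℝ 2 u s)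
    (hode : ∀ r ∈ s, deriv (deriv u) r + k / r * deriv u r + f (u r) = 0)
    (hr : r ∈ s) (hr0 : r ≠ 0) :
    HasDerivAt (radialFlux k u) (-(r ^ k * f (u r))) r := by
  refine ((hasDerivAt_rpow_const (Or.inl hr0)).mul
    (hu.hasDerivAt_deriv_of_isOpen hs hr)).congr_deriv ?_
  rw [rpow_sub_one hr0, show deriv (deriv u) r = -(k / r * deriv u r + f (u r)) by
    linarith [hode r hr]]
  field_simp
  ring

theorem strictAntiOn_radialFlux {D : Set ℝ} (hs : IsOpen s) (hu : ContDiffOn ℝ 2 u s)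
    (hode : ∀ r ∈ s, deriv (deriv u) r + k / r * deriv u r + f (u r) = 0)
    (hD : Convex ℝ D) (hDs : D ⊆ s ∩ Ioi 0) (hf : ∀ r ∈ interior D, 0 < f (u r)) :
    StrictAntiOn (radialFlux k u) D := by
  have hG (r) (hr : r ∈ D) := hasDerivAt_radialFlux hs hu hode (hDs hr).1 (hDs hr).2.ne'
  refine strictAntiOn_of_hasDerivWithinAt_neg hD
    (fun r hr => (hG r hr).continuousAt.continuousWithinAt)
    (fun r hr => (hG r (interior_subset hr)).hasDerivWithinAt) fun r hr => ?_
  exact neg_neg_of_pos (mul_pos (rpow_pos_of_pos (hDs (interior_subset hr)).2 k) (hf r hr))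

theorem strictMonoOn_radialFlux {D : Set ℝ} (hs : IsOpen s) (hu : ContDiffOn ℝ 2 u s)
    (hode : ∀ r ∈ s, deriv (deriv u) r + k / r * deriv u r + f (u r) = 0)
    (hD : Convex ℝ D) (hDs : D ⊆ s ∩ Ioi 0) (hf : ∀ r ∈ interior D, f (u r) < 0) :
    StrictMonoOn (radialFlux k u) D := by
  have hG (r) (hr : r ∈ D) := hasDerivAt_radialFlux hs hu hode (hDs hr).1 (hDs hr).2.ne'
  refine strictMonoOn_of_hasDerivWithinAt_pos hD
    (fun r hr => (hG r hr).continuousAt.continuousWithinAt)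
    (fun r hr => (hG r (interior_subset hr)).hasDerivWithinAt) fun r hr => ?_
  exact neg_pos_of_neg (mul_neg_of_pos_of_neg (rpow_pos_of_pos (hDs (interior_subset hr)).2 k)
    (hf r hr))

theorem linearized_radial_eq (hs : IsOpen s) (hu : ContDiffOn ℝ 2 u s)
    (hode : ∀ r ∈ s, deriv (deriv u) r + k / r * deriv u r + f (u r) = 0)
    (hr : r ∈ s) (hr0 : r ≠ 0) {f' : ℝ} (hf : HasDerivAt f f' (u r)) :
    r ^ 2 * (-(deriv (deriv (deriv u)) r) - k / r * deriv (deriv u) r - f' * deriv u r)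
      = -k * deriv u r := by
  have hEq : deriv (deriv u) =ᶠ[𝓝 r] fun x => -(k * x⁻¹ * deriv u x + f (u x)) := by
    filter_upwards [hs.mem_nhds hr] with x hx
    have h := hode x hx
    rw [div_eq_mul_inv] at h
    linarith
  have hder : HasDerivAt (fun x => -(k * x⁻¹ * deriv u x + f (u x)))
      (-(k * -(r ^ 2)⁻¹ * deriv u r + k * r⁻¹ * deriv (deriv u) r + f' * deriv u r)) r :=
    ((((hasDerivAt_inv hr0).const_mul k).mul
    (hu.hasDerivAt_deriv_of_isOpen hs hr)).add (hf.comp r (hu.hasDerivAt_of_isOpen hs hr))).neg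
  rw [hEq.deriv_eq, hder.deriv]
  field_simp
  ring

end RadialEquation

theorem not_bddBelow_of_div_le_deriv {u : ℝ → ℝ} {c t : ℝ} (hc : 0 < c) (ht : 0 < t)
    (hu : ∀ r ∈ Ioo 0 t, HasDerivAt u (deriv u r) r) (hle : ∀ r ∈ Ioo 0 t, c / r ≤ deriv u r) :
    ¬BddBelow (u '' Ioo 0 t) := by
  rintro ⟨m, hm⟩
  have hmono : MonotoneOn (fun r => u r - c * log r) (Ioo 0 t) := by
    have hd (r) (hr : r ∈ Ioo 0 t) : HasDerivAt (fun r => u r - c * log r) (deriv u r - c * r⁻¹) r :=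
      (hu r hr).sub ((hasDerivAt_log hr.1.ne').const_mul c)
    refine monotoneOn_of_hasDerivWithinAt_nonneg (convex_Ioo 0 t)
      (fun r hr => (hd r hr).continuousAt.continuousWithinAt)
      (fun r hr => (hd r (interior_subset hr)).hasDerivWithinAt) fun r hr => ?_
    rw [interior_Ioo] at hr
    linarith [hle r hr, div_eq_mul_inv c r]
  -- `u - c log` is monotone, so `u r ≤ u a + c (log r - log a)` eventually drops below `m`
  set a := t / 2
  set r := a * exp (-(|u a - m| / c) - 1)
  have ha : a ∈ Ioo 0 t := ⟨half_pos ht, half_lt_self ht⟩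
  have hra : r ≤ a := mul_le_of_le_one_right ha.1.le
    (exp_le_one_iff.2 (by linarith [div_nonneg (abs_nonneg (u a - m)) hc.le]))
  have hr : r ∈ Ioo 0 t := ⟨mul_pos ha.1 (exp_pos _), hra.trans_lt ha.2⟩
  have hlog : log r = log a - |u a - m| / c - 1 := by
    rw [log_mul ha.1.ne' (exp_pos _).ne', log_exp]; ring
  have h1 := hmono hr ha hra
  have h2 := hm ⟨r, hr, rfl⟩
  simp only [hlog] at h1
  have h3 : c * (|u a - m| / c) = |u a - m| := by field_simp
  linarith [le_abs_self (u a - m)]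

theorem deriv_neg_of_strictAntiOn_radialFlux {u : ℝ → ℝ} {k ρ : ℝ} (hk : 1 ≤ k) (hρ : ρ ≤ 1)
    (hG : StrictAntiOn (radialFlux k u) (Ioo 0 ρ))
    (hu : ∀ r ∈ Ioo 0 ρ, HasDerivAt u (deriv u r) r) (hpos : ∀ r ∈ Ioo 0 ρ, 0 < u r) :
    ∀ x ∈ Ioo 0 ρ, deriv u x < 0 := by
  intro x hx
  by_contra! hx0
  have ht : x / 2 ∈ Ioo 0 ρ := ⟨by linarith [hx.1], by linarith [hx.1, hx.2]⟩
  have hc : 0 < radialFlux k u (x / 2) :=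
    (mul_nonneg (rpow_nonneg hx.1.le k) hx0).trans_lt (hG ht hx (by linarith [hx.1]))
  refine not_bddBelow_of_div_le_deriv hc ht.1 (fun r hr => hu r ⟨hr.1, hr.2.trans ht.2⟩)
    (fun r hr => ?_) ⟨0, ?_⟩
  · have hrρ : r ∈ Ioo 0 ρ := ⟨hr.1, hr.2.trans ht.2⟩
    have hrk : 0 < r ^ k := rpow_pos_of_pos hr.1 k
    have hle : r ^ k ≤ r := by
      simpa using rpow_le_rpow_of_exponent_ge hr.1 (hrρ.2.le.trans hρ) hk
    calc radialFlux k u (x / 2) / r ≤ radialFlux k u (x / 2) / r ^ k :=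
          div_le_div_of_nonneg_left hc.le hrk hle
      _ ≤ deriv u r := by
          rw [div_le_iff₀ hrk, mul_comm]
          exact (hG hrρ ht hr.2).le
  · rintro _ ⟨r, hr, rfl⟩
    exact (hpos r ⟨hr.1, hr.2.trans ht.2⟩).le

theorem existsUnique_deriv_eq_zero_of_strictMonoOn_radialFlux {u : ℝ → ℝ} {k a ρ b : ℝ}
    (haρ : a < ρ) (hρb : ρ < b) (hcont : ContinuousOn u (Icc ρ b)) (hu : u ρ = u b)
    (hneg : ∀ r ∈ Ioc a ρ, deriv u r < 0) (hG : StrictMonoOn (radialFlux k u) (Ioo ρ b)) :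
    ∃! z, z ∈ Ioo a b ∧ deriv u z = 0 := by
  obtain ⟨z, hz, hz0⟩ := exists_deriv_eq_zero hρb hcont hu
  refine ⟨z, ⟨⟨haρ.trans hz.1, hz.2⟩, hz0⟩, fun y ⟨hy, hy0⟩ => ?_⟩
  have hρy : ρ < y := not_le.1 fun h => (hneg y ⟨hy.1, h⟩).ne hy0
  exact hG.injOn ⟨hρy, hy.2⟩ hz (by simp [radialFlux, hy0, hz0])

/-- for a sign-changing radial solution `u` of the Lane–Emden
equation in the unit ball with a unique interior zero `r_p`, the derivative
`η = u'` solves `r²(−η'' − ((N−1)/r)η' − p|u|^{p−1}η) = −(N−1)η` on `(1/n,1)`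
for any `n` with `1/n < r_p`, with `η(1/n) < 0`, `η(1) > 0` and a unique zero
in `(1/n,1)`. -/
theorem stmt10 (N : ℕ) (hN : 2 ≤ N) (p : ℝ) (hp : 1 < p)
    (u : ℝ → ℝ) (hu : ContDiffOn ℝ 2 u (Set.Ioo 0 1))
    (hode : ∀ r ∈ Set.Ioo (0 : ℝ) 1,
      deriv (deriv u) r + ((N : ℝ) - 1) / r * deriv u r + |u r| ^ (p - 1) * u r = 0)
    (hu1 : u 1 = 0)
    (rp : ℝ) (hrp : rp ∈ Set.Ioo (0 : ℝ) 1) (hurp : u rp = 0)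
    (hupos : ∀ r ∈ Set.Ioo (0 : ℝ) rp, 0 < u r)
    (huneg : ∀ r ∈ Set.Ioo rp (1 : ℝ), u r < 0)
    (hHopf : deriv u rp < 0) (hHopf1 : 0 < deriv u 1) :
    ∀ n : ℕ, 0 < n → (1 : ℝ) / n < rp →
      (∀ r ∈ Set.Ioo ((1 : ℝ) / n) 1,
        r ^ 2 * (-(deriv (deriv (deriv u)) r)
          - ((N : ℝ) - 1) / r * deriv (deriv u) r
          - p * |u r| ^ (p - 1) * deriv u r)
        = -((N : ℝ) - 1) * deriv u r) ∧
      deriv u ((1 : ℝ) / n) < 0 ∧ 0 < deriv u 1 ∧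
      (∃! z : ℝ, z ∈ Set.Ioo ((1 : ℝ) / n) 1 ∧ deriv u z = 0) := by
  intro n hn hnrp
  have hk : 1 ≤ (N : ℝ) - 1 := by linarith [show (2 : ℝ) ≤ N by exact_mod_cast hN]
  have hn0 : (0 : ℝ) < 1 / n := by positivity
  have hflux_anti : StrictAntiOn (radialFlux ((N : ℝ) - 1) u) (Ioo 0 rp) :=
    strictAntiOn_radialFlux (f := fun s => |s| ^ (p - 1) * s) isOpen_Ioo hu hode (convex_Ioo 0 rp)
      (fun r hr => ⟨⟨hr.1, hr.2.trans hrp.2⟩, hr.1⟩) fun r hr => by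
        rw [interior_Ioo] at hr
        exact mul_pos (rpow_pos_of_pos (abs_pos.2 (hupos r hr).ne') _) (hupos r hr)
  have hflux_mono : StrictMonoOn (radialFlux ((N : ℝ) - 1) u) (Ioo rp 1) :=
    strictMonoOn_radialFlux (f := fun s => |s| ^ (p - 1) * s) isOpen_Ioo hu hode (convex_Ioo rp 1)
      (fun r hr => ⟨⟨hrp.1.trans hr.1, hr.2⟩, hrp.1.trans hr.1⟩) fun r hr => by
        rw [interior_Ioo] at hr
        exact mul_neg_of_pos_of_neg (rpow_pos_of_pos (abs_pos.2 (huneg r hr).ne) _) (huneg r hr)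
  have hderiv_neg : ∀ r ∈ Ioo 0 rp, deriv u r < 0 :=
    deriv_neg_of_strictAntiOn_radialFlux hk hrp.2.le hflux_anti
      (fun r hr => hu.hasDerivAt_of_isOpen isOpen_Ioo ⟨hr.1, hr.2.trans hrp.2⟩) hupos
  have hu_cont : ContinuousOn u (Icc rp 1) := fun r hr => by
    rcases hr.2.eq_or_lt with rfl | hr1
    · exact (differentiableAt_of_deriv_ne_zero hHopf1.ne').continuousAt.continuousWithinAt
    · exact (hu.hasDerivAt_of_isOpen isOpen_Ioo ⟨hrp.1.trans_le hr.1, hr1⟩).continuousAt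
        |>.continuousWithinAt
  refine ⟨fun r hr => linearized_radial_eq isOpen_Ioo hu hode ⟨hn0.trans hr.1, hr.2⟩
      (hn0.trans hr.1).ne' (hasDerivAt_abs_rpow_sub_one_mul hp _),
    hderiv_neg _ ⟨hn0, hnrp⟩, hHopf1, ?_⟩
  refine existsUnique_deriv_eq_zero_of_strictMonoOn_radialFlux hnrp hrp.2 hu_cont
    (hurp.trans hu1.symm) (fun r hr => ?_) hflux_mono
  rcases hr.2.eq_or_lt with rfl | hr'
  · exact hHopf
  · exact hderiv_neg r ⟨hn0.trans hr.1, hr'⟩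
end

section
/- Let p > 1 and let u : (0, r₀) → (0,∞) be C² satisfying u'' + ((N−1)/r)u' + u^p = 0 with N = 2, u > 0 on (0, r₀). Define f(r) = p u(r)^{p-1} r². Then any critical point c ∈ (0, r₀) of f satisfies −u'(c) = 2u(c)/((p−1)c), and at any such critical point f''(c) < 0; consequently f has at most one critical point in (0, r₀), which is a strict maximum. -/
/-!
With `g r = (p - 1) u'(r) r + 2 u(r)` one has `f'(r) = p u(r)^(p-2) r g(r)`, so the critical
points of `f` are the zeros of `g`. At such a zero `c` the equation gives
`g'(c) = -(p - 1) u(c)^p c + 2 u'(c)`, which is negative because `u'(c) < 0` there; hence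
`f''(c) = p u(c)^(p-2) c g'(c) < 0`. A continuous function that crosses every one of its zeros
downwards has at most one zero on an interval; applied to `f'` this gives uniqueness.
-/

open Real Set Filter Topology

section ZerosOfDerivNeg

variable {φ : ℝ → ℝ} {c : ℝ}

lemma eventually_nhdsGT_neg_of_deriv_neg (hd : deriv φ c < 0) (h0 : φ c = 0) :
    ∀ᶠ x in 𝓝[>] c, φ x < 0 := by
  filter_upwards [nhdsWithin_le_nhds (eventually_nhdsWithin_sign_eq_of_deriv_neg hd h0),
    self_mem_nhdsWithin] with x hx (hcx : c < x)
  rwa [← sign_eq_neg_one_iff, hx, sign_eq_neg_one_iff, sub_neg]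

lemma eventually_nhdsLT_pos_of_deriv_neg (hd : deriv φ c < 0) (h0 : φ c = 0) :
    ∀ᶠ x in 𝓝[<] c, 0 < φ x := by
  filter_upwards [nhdsWithin_le_nhds (eventually_nhdsWithin_sign_eq_of_deriv_neg hd h0),
    self_mem_nhdsWithin] with x hx (hxc : x < c)
  rwa [← sign_eq_one_iff, hx, sign_eq_one_iff, sub_pos]

/-- Between two zeros there would have to be an upward crossing: the first zero after a point
where `φ < 0` is approached from below. -/
theorem Set.OrdConnected.subsingleton_zeros_of_deriv_neg {s : Set ℝ} (hs : s.OrdConnected)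
    (hφ : ContinuousOn φ s) (hneg : ∀ x ∈ s, φ x = 0 → deriv φ x < 0) :
    {x ∈ s | φ x = 0}.Subsingleton := by
  suffices ∀ a ∈ s, ∀ b ∈ s, φ a = 0 → φ b = 0 → ¬ a < b by
    rintro a ⟨ha, ha0⟩ b ⟨hb, hb0⟩
    exact le_antisymm (not_lt.1 (this b hb a ha hb0 ha0)) (not_lt.1 (this a ha b hb ha0 hb0))
  intro a ha b hb ha0 hb0 hab
  obtain ⟨x, hx_neg, hx⟩ := ((eventually_nhdsGT_neg_of_deriv_neg (hneg a ha ha0) ha0).and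
    (Ioo_mem_nhdsGT hab)).exists
  have hxb : Icc x b ⊆ s := hs.out' (hs.out ha hb (Ioo_subset_Icc_self hx)) hb
  set Z := Icc x b ∩ φ ⁻¹' {0}
  have hZ_bdd : BddBelow Z := ⟨x, fun z hz => hz.1.1⟩
  have hZ : sInf Z ∈ Z := ((hφ.mono hxb).preimage_isClosed_of_isClosed isClosed_Icc
    isClosed_singleton).csInf_mem ⟨b, right_mem_Icc.2 hx.2.le, hb0⟩ hZ_bdd
  set c := sInf Z
  have hc0 : φ c = 0 := hZ.2
  have hxc : x < c := hZ.1.1.lt_of_ne fun h => hx_neg.ne (h ▸ hc0)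
  obtain ⟨y, hy_pos, hy⟩ := ((eventually_nhdsLT_pos_of_deriv_neg
    (hneg c (hxb hZ.1) hc0) hc0).and (Ioo_mem_nhdsLT hxc)).exists
  have hxy : Icc x y ⊆ Icc x b := Icc_subset_Icc le_rfl (hy.2.le.trans hZ.1.2)
  obtain ⟨z, hz, hz0⟩ := intermediate_value_Ioo hy.1.le (hφ.mono (hxy.trans hxb))
    ⟨hx_neg, hy_pos⟩
  exact (csInf_le hZ_bdd ⟨hxy (Ioo_subset_Icc_self hz), hz0⟩).not_gt (hz.2.trans hy.2)

end ZerosOfDerivNeg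

theorem HasDerivAt.mul_of_right_eq_zero {𝕜 : Type*} [NontriviallyNormedField 𝕜] {h g : 𝕜 → 𝕜}
    {g' c : 𝕜} (hh : DifferentiableAt 𝕜 h c) (hg : HasDerivAt g g' c) (h0 : g c = 0) :
    HasDerivAt (fun x => h x * g x) (h c * g') c := by
  have := hh.hasDerivAt.mul hg
  rwa [h0, mul_zero, zero_add] at this

section

variable {p c : ℝ} {u : ℝ → ℝ}

theorem hasDerivAt_mul_rpow_mul_sq {u' : ℝ} (hu : HasDerivAt u u' c) (hpos : 0 < u c) :
    HasDerivAt (fun x => p * u x ^ (p - 1) * x ^ 2)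
      (p * u c ^ (p - 2) * c * ((p - 1) * u' * c + 2 * u c)) c := by
  refine (((hu.rpow_const (p := p - 1) (Or.inl hpos.ne')).const_mul p).mul
    (hasDerivAt_pow 2 c)).congr_deriv ?_
  rw [show p - 1 - 1 = p - 2 by ring, show p - 1 = p - 2 + 1 by ring, rpow_add hpos, rpow_one]
  push_cast
  ring

theorem deriv_mul_rpow_mul_sq_eventuallyEq
    (hu : ∀ᶠ x in 𝓝 c, DifferentiableAt ℝ u x ∧ 0 < u x) :
    deriv (fun x => p * u x ^ (p - 1) * x ^ 2) =ᶠ[𝓝 c]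
      fun x => p * u x ^ (p - 2) * x * ((p - 1) * deriv u x * x + 2 * u x) :=
  hu.mono fun _ hx => (hasDerivAt_mul_rpow_mul_sq hx.1.hasDerivAt hx.2).deriv

theorem differentiableAt_deriv_mul_rpow_mul_sq
    (hu : ∀ᶠ x in 𝓝 c, DifferentiableAt ℝ u x ∧ 0 < u x) (hu' : DifferentiableAt ℝ (deriv u) c) :
    DifferentiableAt ℝ (deriv fun x => p * u x ^ (p - 1) * x ^ 2) c := by
  obtain ⟨hdu, hpos⟩ := hu.self_of_nhds
  refine DifferentiableAt.congr_of_eventuallyEq ?_ (deriv_mul_rpow_mul_sq_eventuallyEq hu)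
  have := hdu.rpow_const (p := p - 2) (Or.inl hpos.ne')
  fun_prop

theorem deriv_mul_rpow_mul_sq_eq_zero_iff (hp : 0 < p) (hc : 0 < c)
    (hu : ∀ᶠ x in 𝓝 c, DifferentiableAt ℝ u x ∧ 0 < u x) :
    deriv (fun x => p * u x ^ (p - 1) * x ^ 2) c = 0 ↔ (p - 1) * deriv u c * c + 2 * u c = 0 := by
  have hpos : 0 < p * u c ^ (p - 2) * c := by
    have := rpow_pos_of_pos hu.self_of_nhds.2 (p - 2)
    positivity
  rw [(deriv_mul_rpow_mul_sq_eventuallyEq hu).eq_of_nhds, mul_eq_zero, or_iff_right hpos.ne']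

theorem hasDerivAt_deriv_mul_rpow_mul_sq_of_critical {u'' : ℝ}
    (hu : ∀ᶠ x in 𝓝 c, DifferentiableAt ℝ u x ∧ 0 < u x) (hu' : HasDerivAt (deriv u) u'' c)
    (hcrit : (p - 1) * deriv u c * c + 2 * u c = 0) :
    HasDerivAt (deriv fun x => p * u x ^ (p - 1) * x ^ 2)
      (p * u c ^ (p - 2) * c * ((p - 1) * (u'' * c + deriv u c) + 2 * deriv u c)) c := by
  obtain ⟨hdu, hpos⟩ := hu.self_of_nhds
  refine HasDerivAt.congr_of_eventuallyEq ?_ (deriv_mul_rpow_mul_sq_eventuallyEq hu)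
  refine HasDerivAt.mul_of_right_eq_zero ?_ ?_ hcrit
  · have := hdu.rpow_const (p := p - 2) (Or.inl hpos.ne')
    fun_prop
  · exact (((hu'.const_mul (p - 1)).mul (hasDerivAt_id' c)).add
      (hdu.hasDerivAt.const_mul 2)).congr_deriv (by ring)

theorem factor_deriv_neg_of_ode {u₀ u₁ u₂ : ℝ} (hp : 1 < p) (hc : 0 < c) (hu₀ : 0 < u₀)
    (hode : u₂ + 1 / c * u₁ + u₀ ^ p = 0) (hcrit : (p - 1) * u₁ * c + 2 * u₀ = 0) :
    (p - 1) * (u₂ * c + u₁) + 2 * u₁ < 0 := by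
  have hu₁ : u₁ < 0 := by nlinarith [mul_pos (sub_pos.2 hp) hc]
  have hu₂ : u₂ * c + u₁ = -(u₀ ^ p * c) := by
    field_simp at hode
    linarith
  rw [hu₂]
  nlinarith [mul_pos (mul_pos (sub_pos.2 hp) (rpow_pos_of_pos hu₀ p)) hc]

end

theorem stmt11_general (p r₀ : ℝ) (hp : 1 < p)
    (u : ℝ → ℝ) (huC2 : ContDiffOn ℝ 2 u (Set.Ioo 0 r₀))
    (hupos : ∀ r ∈ Set.Ioo (0 : ℝ) r₀, 0 < u r)
    (hode : ∀ r ∈ Set.Ioo (0 : ℝ) r₀,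
      deriv (deriv u) r + (2 - 1 : ℝ) / r * deriv u r + u r ^ p = 0)
    (f : ℝ → ℝ) (hf : ∀ r : ℝ, f r = p * u r ^ (p - 1) * r ^ 2) :
    (∀ c ∈ Set.Ioo (0 : ℝ) r₀, deriv f c = 0 →
      -deriv u c = 2 * u c / ((p - 1) * c) ∧ deriv (deriv f) c < 0) ∧
    (∀ c₁ ∈ Set.Ioo (0 : ℝ) r₀, ∀ c₂ ∈ Set.Ioo (0 : ℝ) r₀,
      deriv f c₁ = 0 → deriv f c₂ = 0 → c₁ = c₂) := by
  obtain rfl : f = fun x => p * u x ^ (p - 1) * x ^ 2 := funext hf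
  have hs : IsOpen (Ioo (0 : ℝ) r₀) := isOpen_Ioo
  have hu : ∀ c ∈ Ioo 0 r₀, ∀ᶠ x in 𝓝 c, DifferentiableAt ℝ u x ∧ 0 < u x := fun c hc =>
    eventually_of_mem (hs.mem_nhds hc) fun x hx =>
      ⟨(huC2.differentiableOn (by norm_num)).differentiableAt (hs.mem_nhds hx), hupos x hx⟩
  have hu' : ∀ c ∈ Ioo 0 r₀, DifferentiableAt ℝ (deriv u) c := fun c hc =>
    ((huC2.deriv_of_isOpen (m := 1) hs (by norm_num)).differentiableOn
      one_ne_zero).differentiableAt (hs.mem_nhds hc)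
  have hcritical : ∀ c ∈ Ioo 0 r₀, deriv (fun x => p * u x ^ (p - 1) * x ^ 2) c = 0 →
      -deriv u c = 2 * u c / ((p - 1) * c) ∧
        deriv (deriv fun x => p * u x ^ (p - 1) * x ^ 2) c < 0 := by
    intro c hc hc0
    have hfactor := (deriv_mul_rpow_mul_sq_eq_zero_iff (by linarith) hc.1 (hu c hc)).1 hc0
    have hpc : 0 < (p - 1) * c := mul_pos (by linarith) hc.1
    refine ⟨by rw [eq_div_iff hpc.ne']; linarith, ?_⟩
    rw [(hasDerivAt_deriv_mul_rpow_mul_sq_of_critical (hu c hc) (hu' c hc).hasDerivAt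
      hfactor).deriv]
    refine mul_neg_of_pos_of_neg ?_ (factor_deriv_neg_of_ode hp hc.1 (hupos c hc)
      (by convert hode c hc using 4; norm_num) hfactor)
    have := rpow_pos_of_pos (hupos c hc) (p - 2)
    have := hc.1
    positivity
  refine ⟨hcritical, fun c₁ h₁ c₂ h₂ e₁ e₂ => ordConnected_Ioo.subsingleton_zeros_of_deriv_neg
    (fun c hc => ?_) (fun c hc h => (hcritical c hc h).2) ⟨h₁, e₁⟩ ⟨h₂, e₂⟩⟩
  exact (differentiableAt_deriv_mul_rpow_mul_sq (hu c hc) (hu' c hc)).continuousAt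
    |>.continuousWithinAt

/-- N = 2: for a positive `C²` solution of
`u'' + u'/r + u^p = 0` on `(0,r₀)` and `f(r) = p u(r)^{p−1} r²`, every critical
point `c` of `f` satisfies `−u'(c) = 2u(c)/((p−1)c)` and `f''(c) < 0`; hence `f`
has at most one critical point on `(0,r₀)`. -/
theorem stmt11 (p r₀ : ℝ) (hp : 1 < p) (hr₀ : 0 < r₀)
    (u : ℝ → ℝ) (huC2 : ContDiffOn ℝ 2 u (Set.Ioo 0 r₀))
    (hupos : ∀ r ∈ Set.Ioo (0 : ℝ) r₀, 0 < u r)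
    (hode : ∀ r ∈ Set.Ioo (0 : ℝ) r₀,
      deriv (deriv u) r + (2 - 1 : ℝ) / r * deriv u r + u r ^ p = 0)
    (f : ℝ → ℝ) (hf : ∀ r : ℝ, f r = p * u r ^ (p - 1) * r ^ 2) :
    (∀ c ∈ Set.Ioo (0 : ℝ) r₀, deriv f c = 0 →
      -deriv u c = 2 * u c / ((p - 1) * c) ∧ deriv (deriv f) c < 0) ∧
    (∀ c₁ ∈ Set.Ioo (0 : ℝ) r₀, ∀ c₂ ∈ Set.Ioo (0 : ℝ) r₀,
      deriv f c₁ = 0 → deriv f c₂ = 0 → c₁ = c₂) :=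
  stmt11_general p r₀ hp u huC2 hupos hode f hf
end
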